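/- Let S be a decision rule system with n(S) > 0 and let C ∈ {AR, EAR, EAD, ESR}. Then h_C(S) ≥ β_C(S) ≥ β_C⁺(S). -/

import Mathlib

/- Common formal framework for decision rule systems and decision trees /
   acyclic decision graphs, following Durdymyradov & Moshkov. -/

attribute [local instance] Classical.propDecidable

noncomputable section

namespace DRS

/-- A decision rule `(a_{i₁}=δ₁) ∧ ⋯ ∧ (a_{i_m}=δ_m) → σ`:
`K` is the finite set of equations (attribute index, value), `rhs` is σ. -/
structure Rule where
  K : Finset (ℕ × ℕ)
  rhs : ℕ

/-- Well-formedness of a rule: the attributes on its left-hand side are pairwise different. -/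
def Rule.WF (r : Rule) : Prop := ∀ p ∈ r.K, ∀ q ∈ r.K, p.1 = q.1 → p = q

/-- A(r): the set of attributes of a rule. -/
def Rule.attrs (r : Rule) : Finset ℕ := r.K.image Prod.fst

/-- The length m of a rule. -/
def Rule.len (r : Rule) : ℕ := r.K.card

/-- A(S) -/
def attrs (S : Finset Rule) : Finset ℕ := S.biUnion Rule.attrs

/-- n(S) -/
def nPar (S : Finset Rule) : ℕ := (attrs S).card

/-- d(S): the maximum length of a rule of S. -/
def dPar (S : Finset Rule) : ℕ := S.sup Rule.len

/-- D(S): the set of right-hand sides. -/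
def rhsSet (S : Finset Rule) : Finset ℕ := S.image Rule.rhs

/-- V_S(a_i) -/
def VS (S : Finset Rule) (i : ℕ) : Finset ℕ :=
  ((S.biUnion Rule.K).filter fun p => p.1 = i).image Prod.snd

/-- k(S) -/
def kPar (S : Finset Rule) : ℕ := (attrs S).sup fun i => (VS S i).card

/-- Attribute values in trees are `Option ℕ`; `none` plays the role of the special value `*`.
`allowed S false i` is (the lift of) `V_S(a_i)`, and `allowed S true i` is `EV_S(a_i)`. -/
def allowed (S : Finset Rule) (ext : Bool) (i : ℕ) : Finset (Option ℕ) :=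
  (VS S i).image some ∪ (if ext then {none} else ∅)

/-- Consistency of an equation system over ω ∪ {*}. -/
def ConsistentE (E : Finset (ℕ × Option ℕ)) : Prop :=
  ∀ p ∈ E, ∀ q ∈ E, p.1 = q.1 → p.2 = q.2

/-- Lift the left-hand side of a rule to an equation system over ω ∪ {*}. -/
def liftK (K : Finset (ℕ × ℕ)) : Finset (ℕ × Option ℕ) :=
  K.image fun p => (p.1, some p.2)

/-- A finite directed labeled graph: the nodes are `0, …, n-1`, with a distinguished root,
each node carries either an attribute (working node) or a set of rules (terminal node),
and edges are labeled with elements of ω ∪ {*}. -/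
structure DGraph where
  n : ℕ
  root : ℕ
  label : ℕ → ℕ ⊕ Finset Rule
  edges : Finset (ℕ × Option ℕ × ℕ)

namespace DGraph

def step (G : DGraph) (u v : ℕ) : Prop := ∃ l, (u, l, v) ∈ G.edges

/-- The graph has no directed cycles. -/
def Acyclic (G : DGraph) : Prop := ∀ v, ¬ Relation.TransGen G.step v v

/-- A node is terminal if no edge leaves it. -/
def IsTerminal (G : DGraph) (v : ℕ) : Prop := ∀ e ∈ G.edges, e.1 ≠ v

/-- The set of rules attached to a (terminal) node. -/
def termSet (G : DGraph) (v : ℕ) : Finset Rule :=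
  Sum.elim (fun _ => (∅ : Finset Rule)) id (G.label v)

/-- `G` is an acyclic decision graph over the rule system `S`;
`ext = false` : branching over `V_S` (o-type), `ext = true` : branching over `EV_S` (e-type).
Terminal nodes are labeled with subsets of S; each working node is labeled with an
attribute `a` of `A(S)` and has exactly one leaving edge for every element of
`V_S(a)` (resp. `EV_S(a)`), the edges leaving it being labeled with these
pairwise different elements. -/
def IsDG (G : DGraph) (S : Finset Rule) (ext : Bool) : Prop :=
  G.root < G.n ∧
  (∀ e ∈ G.edges, e.1 < G.n ∧ e.2.2 < G.n) ∧
  G.Acyclic ∧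
  (∀ v < G.n,
    if G.IsTerminal v then
      ∃ Z : Finset Rule, G.label v = Sum.inr Z ∧ Z ⊆ S
    else
      ∃ a : ℕ, G.label v = Sum.inl a ∧ a ∈ attrs S ∧
        (∀ l : Option ℕ, (∃ w, (v, l, w) ∈ G.edges) ↔ l ∈ allowed S ext a) ∧
        (∀ l w w', (v, l, w) ∈ G.edges → (v, l, w') ∈ G.edges → w = w'))

/-- `G` is a finite directed tree with root: the root has no entering edge and every
other node has exactly one entering edge (together with acyclicity this makes the
graph a rooted tree). -/
def IsTree (G : DGraph) : Prop :=
  (∀ e ∈ G.edges, e.2.2 ≠ G.root) ∧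
  (∀ v < G.n, v ≠ G.root → ∃! e, e ∈ G.edges ∧ e.2.2 = v)

/-- `chainFrom G v p t`: the list `p` of (node, leaving-edge-label) pairs forms a
directed path in `G` starting at `v` and ending at `t`. -/
def chainFrom (G : DGraph) : ℕ → List (ℕ × Option ℕ) → ℕ → Prop
  | v, [], t => v = t
  | v, e :: rest, t => e.1 = v ∧ ∃ w, (v, e.2, w) ∈ G.edges ∧ chainFrom G w rest t

/-- A complete path: from the root to a terminal node; it is recorded by the list of
its working nodes with the labels of the edges taken, together with its terminal node. -/
def IsCompletePath (G : DGraph) (p : List (ℕ × Option ℕ)) (t : ℕ) : Prop :=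
  G.chainFrom G.root p t ∧ G.IsTerminal t ∧ t < G.n

/-- K(ξ): the equation system associated with a complete path. -/
def pathEqs (G : DGraph) (p : List (ℕ × Option ℕ)) : Finset (ℕ × Option ℕ) :=
  (p.filterMap fun e =>
    Sum.elim (fun a => some (a, e.2)) (fun _ => none) (G.label e.1)).toFinset

/-- L(Γ): the number of nodes. -/
def size (G : DGraph) : ℕ := G.n

/-- T(Γ): the number of terminal nodes labeled with pairwise different sets of rules. -/
def tCount (G : DGraph) : ℕ :=
  (((Finset.range G.n).filter fun v => G.IsTerminal v).image fun v => G.termSet v).card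

/-- h(Γ): the maximum number of working nodes on a complete path. -/
def depth (G : DGraph) : ℕ :=
  sSup {m | ∃ p t, G.IsCompletePath p t ∧ p.length = m}

/-- Path conditions for (the solutions of) the problems All Rules / EAll Rules. -/
def SolvesAR (G : DGraph) (S : Finset Rule) : Prop :=
  ∀ p t, G.IsCompletePath p t → ConsistentE (G.pathEqs p) →
    (∀ r ∈ G.termSet t, liftK r.K ⊆ G.pathEqs p) ∧
    (∀ r ∈ S, r ∉ G.termSet t → ¬ ConsistentE (liftK r.K ∪ G.pathEqs p))

/-- Path conditions for the problems All Decisions / EAll Decisions. -/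
def SolvesAD (G : DGraph) (S : Finset Rule) : Prop :=
  ∀ p t, G.IsCompletePath p t → ConsistentE (G.pathEqs p) →
    (∀ r ∈ G.termSet t, liftK r.K ⊆ G.pathEqs p) ∧
    (∀ r ∈ S, r ∉ G.termSet t → r.rhs ∉ (G.termSet t).image Rule.rhs →
      ¬ ConsistentE (liftK r.K ∪ G.pathEqs p))

/-- Path conditions for the problems Some Rules / ESome Rules. -/
def SolvesSR (G : DGraph) (S : Finset Rule) : Prop :=
  ∀ p t, G.IsCompletePath p t → ConsistentE (G.pathEqs p) →
    (∀ r ∈ G.termSet t, liftK r.K ⊆ G.pathEqs p) ∧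
    (G.termSet t = ∅ → ∀ r ∈ S, ¬ ConsistentE (liftK r.K ∪ G.pathEqs p))

end DGraph

/-- Γ is a decision tree over S solving AR(S) (an o-tree). -/
def TreeSolvesAR (S : Finset Rule) (G : DGraph) : Prop :=
  G.IsDG S false ∧ G.IsTree ∧ G.SolvesAR S
/-- Γ is a decision tree over S solving EAR(S) (an e-tree). -/
def TreeSolvesEAR (S : Finset Rule) (G : DGraph) : Prop :=
  G.IsDG S true ∧ G.IsTree ∧ G.SolvesAR S
/-- Γ is a decision tree over S solving AD(S) (an o-tree). -/
def TreeSolvesAD (S : Finset Rule) (G : DGraph) : Prop :=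
  G.IsDG S false ∧ G.IsTree ∧ G.SolvesAD S
/-- Γ is a decision tree over S solving EAD(S) (an e-tree). -/
def TreeSolvesEAD (S : Finset Rule) (G : DGraph) : Prop :=
  G.IsDG S true ∧ G.IsTree ∧ G.SolvesAD S
/-- Γ is a decision tree over S solving SR(S) (an o-tree). -/
def TreeSolvesSR (S : Finset Rule) (G : DGraph) : Prop :=
  G.IsDG S false ∧ G.IsTree ∧ G.SolvesSR S
/-- Γ is a decision tree over S solving ESR(S) (an e-tree). -/
def TreeSolvesESR (S : Finset Rule) (G : DGraph) : Prop :=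
  G.IsDG S true ∧ G.IsTree ∧ G.SolvesSR S

/-- L_AR(S): minimum number of nodes of a decision tree over S solving AR(S). -/
def L_AR (S : Finset Rule) : ℕ := sInf {m | ∃ G : DGraph, TreeSolvesAR S G ∧ G.size = m}
def L_EAR (S : Finset Rule) : ℕ := sInf {m | ∃ G : DGraph, TreeSolvesEAR S G ∧ G.size = m}
def L_AD (S : Finset Rule) : ℕ := sInf {m | ∃ G : DGraph, TreeSolvesAD S G ∧ G.size = m}
def L_EAD (S : Finset Rule) : ℕ := sInf {m | ∃ G : DGraph, TreeSolvesEAD S G ∧ G.size = m}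
def L_SR (S : Finset Rule) : ℕ := sInf {m | ∃ G : DGraph, TreeSolvesSR S G ∧ G.size = m}
def L_ESR (S : Finset Rule) : ℕ := sInf {m | ∃ G : DGraph, TreeSolvesESR S G ∧ G.size = m}

/-- T_AR(S): minimum number of differently-labeled terminal nodes of a decision tree
over S solving AR(S); similarly for the other problems. -/
def T_AR (S : Finset Rule) : ℕ := sInf {m | ∃ G : DGraph, TreeSolvesAR S G ∧ G.tCount = m}
def T_EAR (S : Finset Rule) : ℕ := sInf {m | ∃ G : DGraph, TreeSolvesEAR S G ∧ G.tCount = m}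
def T_AD (S : Finset Rule) : ℕ := sInf {m | ∃ G : DGraph, TreeSolvesAD S G ∧ G.tCount = m}
def T_EAD (S : Finset Rule) : ℕ := sInf {m | ∃ G : DGraph, TreeSolvesEAD S G ∧ G.tCount = m}
def T_SR (S : Finset Rule) : ℕ := sInf {m | ∃ G : DGraph, TreeSolvesSR S G ∧ G.tCount = m}
def T_ESR (S : Finset Rule) : ℕ := sInf {m | ∃ G : DGraph, TreeSolvesESR S G ∧ G.tCount = m}

/-- h_AR(S): minimum depth of a decision tree over S solving AR(S); similarly for the others. -/
def h_AR (S : Finset Rule) : ℕ := sInf {m | ∃ G : DGraph, TreeSolvesAR S G ∧ G.depth = m}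
def h_EAR (S : Finset Rule) : ℕ := sInf {m | ∃ G : DGraph, TreeSolvesEAR S G ∧ G.depth = m}
def h_AD (S : Finset Rule) : ℕ := sInf {m | ∃ G : DGraph, TreeSolvesAD S G ∧ G.depth = m}
def h_EAD (S : Finset Rule) : ℕ := sInf {m | ∃ G : DGraph, TreeSolvesEAD S G ∧ G.depth = m}
def h_SR (S : Finset Rule) : ℕ := sInf {m | ∃ G : DGraph, TreeSolvesSR S G ∧ G.depth = m}
def h_ESR (S : Finset Rule) : ℕ := sInf {m | ∃ G : DGraph, TreeSolvesESR S G ∧ G.depth = m}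

/-- L^DG_SR(S): minimum number of nodes of an acyclic decision graph solving SR(S). -/
def LDG_SR (S : Finset Rule) : ℕ :=
  sInf {m | ∃ G : DGraph, G.IsDG S false ∧ G.SolvesSR S ∧ G.size = m}
/-- L^DG_ESR(S): minimum number of nodes of an acyclic decision graph solving ESR(S). -/
def LDG_ESR (S : Finset Rule) : ℕ :=
  sInf {m | ∃ G : DGraph, G.IsDG S true ∧ G.SolvesSR S ∧ G.size = m}

/-- A node cover of the hypergraph G(S). -/
def IsNodeCover (S : Finset Rule) (B : Finset ℕ) : Prop :=
  B ⊆ attrs S ∧ ∀ r ∈ S, (Rule.attrs r).Nonempty → (Rule.attrs r ∩ B).Nonempty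

/-- β(S): the minimum cardinality of a node cover of the hypergraph G(S). -/
def beta (S : Finset Rule) : ℕ := sInf {c | ∃ B, IsNodeCover S B ∧ B.card = c}

/-- S⁺: the subsystem of S consisting of all rules of length d(S). -/
def Splus (S : Finset Rule) : Finset Rule := S.filter fun r => r.len = dPar S

/-- β⁺(S) = β(S⁺). -/
def betaPlus (S : Finset Rule) : ℕ := beta (Splus S)

/-- The rule r_α : delete from the left-hand side of r all equations belonging to α. -/
def Rule.restrict (r : Rule) (α : Finset (ℕ × Option ℕ)) : Rule :=
  ⟨r.K.filter fun p => (p.1, some p.2) ∉ α, r.rhs⟩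

/-- S_α : the system of the rules r_α for all r ∈ S with K(r) ∪ α consistent. -/
def restrict (S : Finset Rule) (α : Finset (ℕ × Option ℕ)) : Finset Rule :=
  (S.filter fun r => ConsistentE (liftK r.K ∪ α)).image fun r => r.restrict α

/-- E_C(S): consistent equation systems whose attributes are in A(S) and whose
values belong to V_S (ext = false) resp. EV_S (ext = true). -/
def ESys (S : Finset Rule) (ext : Bool) : Set (Finset (ℕ × Option ℕ)) :=
  {α | ConsistentE α ∧ ∀ p ∈ α, p.1 ∈ attrs S ∧ p.2 ∈ allowed S ext p.1}

/-- I_SR(S). -/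
def I_SR (S : Finset Rule) : Finset Rule :=
  if ∃ r ∈ S, r.len = 0 then S.filter fun r => r.len = 0 else S

/-- D₀(S): the right-hand sides of the rules of S of length 0. -/
def D0 (S : Finset Rule) : Finset ℕ := (S.filter fun r => r.len = 0).image Rule.rhs

/-- I_AD(S). -/
def I_AD (S : Finset Rule) : Finset Rule :=
  S.filter fun r => r.len = 0 ∨ r.rhs ∉ D0 S

def betaC (S : Finset Rule) (ext : Bool) : ℕ :=
  sSup {b | ∃ α ∈ ESys S ext, beta (restrict S α) = b}
def betaCplus (S : Finset Rule) (ext : Bool) : ℕ :=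
  sSup {b | ∃ α ∈ ESys S ext, betaPlus (restrict S α) = b}
def betaI (S : Finset Rule) (I : Finset Rule → Finset Rule) : ℕ :=
  sSup {b | ∃ α ∈ ESys S true, beta (I (restrict S α)) = b}
def betaIplus (S : Finset Rule) (I : Finset Rule → Finset Rule) : ℕ :=
  sSup {b | ∃ α ∈ ESys S true, betaPlus (I (restrict S α)) = b}

def beta_AR (S : Finset Rule) : ℕ := betaC S false
def beta_AD (S : Finset Rule) : ℕ := betaC S false
def beta_SR (S : Finset Rule) : ℕ := betaC S false
def beta_EAR (S : Finset Rule) : ℕ := betaC S true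
def beta_ARplus (S : Finset Rule) : ℕ := betaCplus S false
def beta_ADplus (S : Finset Rule) : ℕ := betaCplus S false
def beta_SRplus (S : Finset Rule) : ℕ := betaCplus S false
def beta_EARplus (S : Finset Rule) : ℕ := betaCplus S true
def beta_EAD (S : Finset Rule) : ℕ := betaI S I_AD
def beta_EADplus (S : Finset Rule) : ℕ := betaIplus S I_AD
def beta_ESR (S : Finset Rule) : ℕ := betaI S I_SR
def beta_ESRplus (S : Finset Rule) : ℕ := betaIplus S I_SR

/-- R_SR(S). -/
def R_SR (S : Finset Rule) : Finset Rule :=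
  S.filter fun r => ¬ ∃ r' ∈ S, r'.K ⊂ r.K

/-- R_AD(S). -/
def R_AD (S : Finset Rule) : Finset Rule :=
  S.filter fun r => ¬ ∃ r' ∈ S, r'.K ⊂ r.K ∧ r'.rhs = r.rhs

/-- A reduced decision rule system. -/
def Reduced (S : Finset Rule) : Prop :=
  attrs S ⊆ Finset.range (nPar S + 1) ∧
  rhsSet S ⊆ Finset.range ((rhsSet S).card + 1) ∧
  (∀ i ∈ attrs S, VS S i ⊆ Finset.range (kPar S + 1)) ∧
  1 ≤ dPar S

/-- Length of the binary representation of a natural number. -/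
def bitLen (m : ℕ) : ℕ := max 1 (Nat.size m)

/-- The length of the word "(a⟨i⟩=⟨δ⟩)" encoding one equation. -/
def eqLen (p : ℕ × ℕ) : ℕ := 4 + bitLen p.1 + bitLen p.2

/-- The length of the word encoding one rule (with the "∧" signs and "→"). -/
def Rule.wordLen (r : Rule) : ℕ :=
  (∑ p ∈ r.K, eqLen p) + (r.K.card - 1) + 1 + bitLen r.rhs

/-- size(S): the length of the word representing S (with ";" separating the rules). -/
def sizeS (S : Finset Rule) : ℕ := (∑ r ∈ S, r.wordLen) + (S.card - 1)

/-!
Fix `α ∈ E_C(S)` and a decision tree `Γ` solving the problem. Answering every query by the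
value `α` prescribes, and otherwise by `*` (e-trees) or by some value of `V_S` (o-trees), leads
from the root to a terminal node along a complete path `ξ` with `K(ξ) ∪ α` consistent. If a rule
`r_α` of positive length in `S_α` (resp. `I_C(S_α)`) had no attribute queried on `ξ`, then `r`
would be consistent with `K(ξ)`, and the conditions on `Γ` would force `K(r) ⊆ K(ξ)`, which is
impossible. For EAD and ESR one also uses that on such a path every rule of the terminal node
restricts to a rule of length `0` of `S_α`, which removes `r_α` from `I_C(S_α)`. So the attributes
of `K(ξ)` cover the hypergraph and `β ≤ h(Γ)`; since `h_C(S)` is attained (the complete tree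
querying all of `A(S)` in a fixed order solves AR and EAR), `β_C(S) ≤ h_C(S)`. Finally
`β⁺ ≤ β` because `S⁺ ⊆ S` and `β` is monotone.
-/

lemma ConsistentE.mono {E F : Finset (ℕ × Option ℕ)} (hF : ConsistentE F) (h : E ⊆ F) :
    ConsistentE E := fun p hp q hq => hF p (h hp) q (h hq)

lemma ConsistentE.union {A B : Finset (ℕ × Option ℕ)} (hA : ConsistentE A) (hB : ConsistentE B)
    (hAB : ∀ p ∈ A, ∀ q ∈ B, p.1 = q.1 → p.2 = q.2) : ConsistentE (A ∪ B) := by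
  intro p hp q hq hpq
  rcases Finset.mem_union.1 hp with hp | hp <;> rcases Finset.mem_union.1 hq with hq | hq
  exacts [hA p hp q hq hpq, hAB p hp q hq hpq, (hAB q hq p hp hpq.symm).symm, hB p hp q hq hpq]

lemma consistentE_of_forall_eq {E : Finset (ℕ × Option ℕ)} {c : ℕ → Option ℕ}
    (h : ∀ q ∈ E, c q.1 = q.2) : ConsistentE E := fun p hp q hq hpq => by
  rw [← h p hp, ← h q hq, hpq]

lemma Rule.consistentE_liftK {r : Rule} (hr : r.WF) : ConsistentE (liftK r.K) := by
  simp only [ConsistentE, liftK, Finset.mem_image]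
  rintro _ ⟨x, hx, rfl⟩ _ ⟨y, hy, rfl⟩ hxy
  rw [hr x hx y hy hxy]

lemma Rule.attrs_nonempty_iff {r : Rule} : r.attrs.Nonempty ↔ r.len ≠ 0 := by
  rw [Rule.attrs, Rule.len, Finset.image_nonempty, Finset.card_ne_zero]

lemma VS_nonempty {S : Finset Rule} {a : ℕ} (ha : a ∈ attrs S) : (VS S a).Nonempty := by
  obtain ⟨r, hr, har⟩ := Finset.mem_biUnion.1 ha
  obtain ⟨p, hp, rfl⟩ := Finset.mem_image.1 har
  exact ⟨p.2, Finset.mem_image.2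
    ⟨p, Finset.mem_filter.2 ⟨Finset.mem_biUnion.2 ⟨r, hr, hp⟩, rfl⟩, rfl⟩⟩

lemma some_mem_allowed {S : Finset Rule} {a δ : ℕ} (ext : Bool) (h : δ ∈ VS S a) :
    some δ ∈ allowed S ext a :=
  Finset.mem_union_left _ (Finset.mem_image_of_mem _ h)

lemma none_mem_allowed (S : Finset Rule) (a : ℕ) : none ∈ allowed S true a := by
  simp [allowed]

lemma empty_mem_ESys (S : Finset Rule) (ext : Bool) : ∅ ∈ ESys S ext :=
  ⟨by simp [ConsistentE], by simp⟩

lemma attrs_mono {T T' : Finset Rule} (h : T' ⊆ T) : attrs T' ⊆ attrs T :=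
  Finset.biUnion_subset_biUnion_of_subset_left _ h

lemma isNodeCover_attrs (T : Finset Rule) : IsNodeCover T (attrs T) :=
  ⟨subset_rfl, fun r hr ⟨a, ha⟩ => ⟨a, Finset.mem_inter.2 ⟨ha, Finset.mem_biUnion.2 ⟨r, hr, ha⟩⟩⟩⟩

lemma beta_le_card_of_isNodeCover {T : Finset Rule} {B : Finset ℕ} (h : IsNodeCover T B) :
    beta T ≤ B.card :=
  Nat.sInf_le ⟨B, h, rfl⟩

lemma beta_le_card_of_forall_inter_nonempty {T : Finset Rule} {B : Finset ℕ}
    (h : ∀ r ∈ T, r.attrs.Nonempty → (r.attrs ∩ B).Nonempty) : beta T ≤ B.card := by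
  have hcov : IsNodeCover T (B ∩ attrs T) := by
    refine ⟨Finset.inter_subset_right, fun r hr hne => ?_⟩
    obtain ⟨a, ha⟩ := h r hr hne
    obtain ⟨har, haB⟩ := Finset.mem_inter.1 ha
    exact ⟨a, Finset.mem_inter.2 ⟨har, Finset.mem_inter.2 ⟨haB, Finset.mem_biUnion.2 ⟨r, hr, har⟩⟩⟩⟩
  exact (beta_le_card_of_isNodeCover hcov).trans (Finset.card_le_card Finset.inter_subset_left)

lemma beta_le_card_attrs (T : Finset Rule) : beta T ≤ (attrs T).card :=
  beta_le_card_of_isNodeCover (isNodeCover_attrs T)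

lemma beta_mono {T T' : Finset Rule} (h : T' ⊆ T) : beta T' ≤ beta T := by
  obtain ⟨B, hB, hcard⟩ : ∃ B, IsNodeCover T B ∧ B.card = beta T :=
    Nat.sInf_mem (s := {c | ∃ B, IsNodeCover T B ∧ B.card = c}) ⟨_, _, isNodeCover_attrs T, rfl⟩
  exact hcard ▸ beta_le_card_of_forall_inter_nonempty fun r hr hne => hB.2 r (h hr) hne

lemma betaPlus_le_beta (T : Finset Rule) : betaPlus T ≤ beta T :=
  beta_mono (Finset.filter_subset _ _)

lemma I_SR_subset (T : Finset Rule) : I_SR T ⊆ T := by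
  unfold I_SR
  split_ifs
  exacts [Finset.filter_subset _ _, subset_rfl]

lemma I_AD_subset (T : Finset Rule) : I_AD T ⊆ T := Finset.filter_subset _ _

lemma mem_restrict {S : Finset Rule} {α : Finset (ℕ × Option ℕ)} {x : Rule} :
    x ∈ restrict S α ↔ ∃ r ∈ S, ConsistentE (liftK r.K ∪ α) ∧ r.restrict α = x := by
  simp only [restrict, Finset.mem_image, Finset.mem_filter, and_assoc]

lemma attrs_restrict_subset (S : Finset Rule) (α : Finset (ℕ × Option ℕ)) :
    attrs (restrict S α) ⊆ attrs S := by
  intro a ha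
  obtain ⟨x, hx, hax⟩ := Finset.mem_biUnion.1 ha
  obtain ⟨r, hr, -, rfl⟩ := mem_restrict.1 hx
  refine Finset.mem_biUnion.2 ⟨r, hr, Finset.image_subset_image (Finset.filter_subset _ _) hax⟩

lemma beta_le_nPar_of_subset_restrict {S T : Finset Rule} {α : Finset (ℕ × Option ℕ)}
    (hT : T ⊆ restrict S α) : beta T ≤ nPar S :=
  (beta_le_card_attrs T).trans
    (Finset.card_le_card ((attrs_mono hT).trans (attrs_restrict_subset S α)))

lemma consistentE_liftK_union_of_disjoint {r : Rule} (hr : r.WF) {K α : Finset (ℕ × Option ℕ)}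
    (hKα : ConsistentE (K ∪ α)) (hdisj : Disjoint (r.restrict α).attrs (K.image Prod.fst)) :
    ConsistentE (liftK r.K ∪ K) := by
  refine (Rule.consistentE_liftK hr).union (hKα.mono Finset.subset_union_left) ?_
  simp only [liftK, Finset.mem_image]
  rintro _ ⟨y, hy, rfl⟩ q hq hyq
  by_cases hyα : (y.1, some y.2) ∈ α
  · exact hKα _ (Finset.mem_union_right _ hyα) q (Finset.mem_union_left _ hq) hyq
  · refine absurd (Finset.mem_image_of_mem Prod.fst hq) (Finset.disjoint_left.1 hdisj ?_)
    exact hyq ▸ Finset.mem_image_of_mem Prod.fst (Finset.mem_filter.2 ⟨hy, hyα⟩)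

lemma restrict_mem_and_len_eq_zero {S : Finset Rule} {α K : Finset (ℕ × Option ℕ)}
    (hα : ConsistentE α) (hstar : ∀ q ∈ K, q ∈ α ∨ q.2 = none) {r : Rule} (hr : r ∈ S)
    (hrK : liftK r.K ⊆ K) : r.restrict α ∈ restrict S α ∧ (r.restrict α).len = 0 := by
  have hrα : liftK r.K ⊆ α := by
    intro q hq
    obtain ⟨y, -, rfl⟩ := Finset.mem_image.1 hq
    simpa using hstar _ (hrK hq)
  refine ⟨mem_restrict.2 ⟨r, hr, by rwa [Finset.union_eq_right.2 hrα], rfl⟩, ?_⟩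
  simp only [Rule.len, Rule.restrict, Finset.card_eq_zero, Finset.filter_eq_empty_iff, not_not]
  exact fun y hy => hrα (Finset.mem_image_of_mem _ hy)

namespace DGraph

variable {G : DGraph}

lemma pathEqs_nil : G.pathEqs [] = ∅ := rfl

lemma pathEqs_cons {v a : ℕ} (h : G.label v = Sum.inl a) (l : Option ℕ)
    (rest : List (ℕ × Option ℕ)) : G.pathEqs ((v, l) :: rest) = insert (a, l) (G.pathEqs rest) := by
  simp [pathEqs, h]

lemma card_pathEqs_le (p : List (ℕ × Option ℕ)) : (G.pathEqs p).card ≤ p.length :=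
  (List.toFinset_card_le _).trans (List.length_filterMap_le _ _)

lemma chainFrom.reflTransGen {v t : ℕ} {p : List (ℕ × Option ℕ)} (h : G.chainFrom v p t) :
    ∀ e ∈ p, Relation.ReflTransGen G.step v e.1 ∧ ∃ w, (e.1, e.2, w) ∈ G.edges := by
  induction p generalizing v with
  | nil => simp
  | cons e rest ih =>
    obtain ⟨rfl, w, hw, hrest⟩ := h
    intro e' he'
    rcases List.mem_cons.1 he' with rfl | he'
    · exact ⟨.refl, w, hw⟩
    · exact (ih hrest e' he').imp_left (Relation.ReflTransGen.head ⟨e.2, hw⟩)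

lemma chainFrom.nodup (hac : G.Acyclic) {v t : ℕ} {p : List (ℕ × Option ℕ)}
    (h : G.chainFrom v p t) : (p.map Prod.fst).Nodup := by
  induction p generalizing v with
  | nil => simp
  | cons e rest ih =>
    obtain ⟨rfl, w, hw, hrest⟩ := h
    refine List.nodup_cons.2 ⟨fun hmem => ?_, ih hrest⟩
    obtain ⟨e', he', hee'⟩ := List.mem_map.1 hmem
    exact hac e.1 (.head' ⟨e.2, hw⟩ (hee' ▸ (hrest.reflTransGen e' he').1))

lemma chainFrom.length_le (hac : G.Acyclic) (hsrc : ∀ e ∈ G.edges, e.1 < G.n) {v t : ℕ}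
    {p : List (ℕ × Option ℕ)} (h : G.chainFrom v p t) : p.length ≤ G.n := by
  have hsub : (p.map Prod.fst).toFinset ⊆ Finset.range G.n := by
    intro u hu
    obtain ⟨e, he, rfl⟩ := List.mem_map.1 (List.mem_toFinset.1 hu)
    obtain ⟨w, hw⟩ := (h.reflTransGen e he).2
    exact Finset.mem_range.2 (hsrc _ hw)
  simpa [List.toFinset_card_of_nodup (h.nodup hac)] using Finset.card_le_card hsub

lemma IsCompletePath.length_le_depth {S : Finset Rule} {ext : Bool} (hG : G.IsDG S ext)
    {p : List (ℕ × Option ℕ)} {t : ℕ} (h : G.IsCompletePath p t) : p.length ≤ G.depth :=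
  le_csSup ⟨G.n, fun _ ⟨_, _, h', hm⟩ => hm ▸ h'.1.length_le hG.2.2.1 fun e he => (hG.2.1 e he).1⟩
    ⟨p, t, h, rfl⟩

lemma exists_chainFrom_of_answers {S : Finset Rule} {ext : Bool} (hG : G.IsDG S ext)
    (c : ℕ → Option ℕ) (hc : ∀ a ∈ attrs S, c a ∈ allowed S ext a) (v : ℕ) (hv : v < G.n) :
    ∃ p t, G.chainFrom v p t ∧ G.IsTerminal t ∧ t < G.n ∧ ∀ q ∈ G.pathEqs p, c q.1 = q.2 := by
  obtain ⟨-, hedge, hac, hnode⟩ := hG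
  -- well-founded induction along reachability, a strict order on the finitely many nodes
  let R : Fin G.n → Fin G.n → Prop := fun w u => Relation.TransGen G.step u w
  have : IsTrans (Fin G.n) R := ⟨fun _ _ _ h₁ h₂ => h₂.trans h₁⟩
  have : Std.Irrefl R := ⟨fun u => hac u⟩
  suffices ∀ u : Fin G.n, ∃ p t, G.chainFrom u p t ∧ G.IsTerminal t ∧ t < G.n ∧
      ∀ q ∈ G.pathEqs p, c q.1 = q.2 from this ⟨v, hv⟩
  intro u
  induction u using (Finite.wellFounded_of_trans_of_irrefl R).induction with | _ u ih => ?_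
  by_cases ht : G.IsTerminal u
  · exact ⟨[], u, rfl, ht, u.2, by simp [pathEqs_nil]⟩
  obtain ⟨a, hlab, ha, hiff, -⟩ := by simpa only [if_neg ht] using hnode u u.2
  obtain ⟨w, huw⟩ := (hiff (c a)).2 (hc a ha)
  obtain ⟨p, t, hp, htm, htn, hpc⟩ := ih ⟨w, (hedge _ huw).2⟩ (.single ⟨c a, huw⟩)
  refine ⟨(u, c a) :: p, t, ⟨rfl, w, huw, hp⟩, htm, htn, ?_⟩
  rw [pathEqs_cons hlab]
  intro q hq
  rcases Finset.mem_insert.1 hq with rfl | hq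
  exacts [rfl, hpc q hq]

lemma termSet_subset {S : Finset Rule} {ext : Bool} (hG : G.IsDG S ext)
    {t : ℕ} (ht : G.IsTerminal t) (htn : t < G.n) : G.termSet t ⊆ S := by
  obtain ⟨Z, hlab, hZ⟩ := by simpa only [if_pos ht] using hG.2.2.2 t htn
  simpa [termSet, hlab] using hZ

lemma SolvesAR.solvesAD {S : Finset Rule} (h : G.SolvesAR S) :
    G.SolvesAD S := fun p t hcp hc =>
  ⟨(h p t hcp hc).1, fun r hr hrt _ => (h p t hcp hc).2 r hr hrt⟩

lemma SolvesAR.solvesSR {S : Finset Rule} (h : G.SolvesAR S) :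
    G.SolvesSR S := fun p t hcp hc =>
  ⟨(h p t hcp hc).1, fun hemp r hr => (h p t hcp hc).2 r hr (hemp ▸ Finset.notMem_empty r)⟩

end DGraph

lemma exists_answers_of_mem_ESys {S : Finset Rule} {ext : Bool} {α : Finset (ℕ × Option ℕ)}
    (hα : α ∈ ESys S ext) : ∃ c : ℕ → Option ℕ, (∀ a ∈ attrs S, c a ∈ allowed S ext a) ∧
      (∀ q ∈ α, c q.1 = q.2) ∧ (ext = true → ∀ a, (a, c a) ∈ α ∨ c a = none) := by
  have (a : ℕ) : ∃ x : Option ℕ, (a ∈ attrs S → x ∈ allowed S ext a) ∧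
      (∀ w, (a, w) ∈ α → x = w) ∧ (ext = true → (a, x) ∈ α ∨ x = none) := by
    by_cases hw : ∃ w, (a, w) ∈ α
    · obtain ⟨w, hw⟩ := hw
      exact ⟨w, fun _ => (hα.2 _ hw).2, fun w' hw' => hα.1 _ hw _ hw' rfl, fun _ => .inl hw⟩
    simp only [not_exists] at hw
    cases ext with
    | true =>
      exact ⟨none, fun _ => none_mem_allowed S a, fun w h => absurd h (hw w), fun _ => .inr rfl⟩
    | false =>
      by_cases hV : (VS S a).Nonempty
      · exact ⟨some hV.choose, fun _ => some_mem_allowed _ hV.choose_spec,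
          fun w h => absurd h (hw w), nofun⟩
      · exact ⟨none, fun ha => absurd (VS_nonempty ha) hV, fun w h => absurd h (hw w), nofun⟩
  choose c hallowed hα' hstar using this
  exact ⟨c, hallowed, fun q hq => hα' q.1 q.2 hq, fun hext a => hstar a hext⟩

lemma DGraph.exists_isCompletePath_consistentE {G : DGraph} {S : Finset Rule} {ext : Bool}
    (hG : G.IsDG S ext) {α : Finset (ℕ × Option ℕ)} (hα : α ∈ ESys S ext) :
    ∃ p t, G.IsCompletePath p t ∧ ConsistentE (G.pathEqs p ∪ α) ∧
      (ext = true → ∀ q ∈ G.pathEqs p, q ∈ α ∨ q.2 = none) := by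
  obtain ⟨c, hallowed, hcα, hstar⟩ := exists_answers_of_mem_ESys hα
  obtain ⟨p, t, hp, ht, htn, hpc⟩ := G.exists_chainFrom_of_answers hG c hallowed G.root hG.1
  refine ⟨p, t, ⟨hp, ht, htn⟩, consistentE_of_forall_eq (c := c) ?_, fun hext q hq => ?_⟩
  · intro q hq
    rcases Finset.mem_union.1 hq with hq | hq
    exacts [hpc q hq, hcα q hq]
  · simpa [hpc q hq] using hstar hext q.1

lemma beta_le_depth_of_isCompletePath {G : DGraph} {S : Finset Rule} {ext : Bool}
    (hG : G.IsDG S ext) (hwf : ∀ r ∈ S, r.WF) {α : Finset (ℕ × Option ℕ)}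
    {p : List (ℕ × Option ℕ)} {t : ℕ} (hcp : G.IsCompletePath p t)
    (hK : ConsistentE (G.pathEqs p ∪ α)) {T : Finset Rule} (hT : T ⊆ restrict S α)
    (hsub : ∀ r ∈ S, r.restrict α ∈ T → (r.restrict α).len ≠ 0 →
      ConsistentE (liftK r.K ∪ G.pathEqs p) → liftK r.K ⊆ G.pathEqs p) :
    beta T ≤ G.depth := by
  refine (beta_le_card_of_forall_inter_nonempty (B := (G.pathEqs p).image Prod.fst) ?_).trans <|
    Finset.card_image_le.trans <| (G.card_pathEqs_le p).trans (hcp.length_le_depth hG)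
  intro x hx hne
  obtain ⟨r, hr, -, rfl⟩ := mem_restrict.1 (hT hx)
  by_contra hdisj
  rw [Finset.not_nonempty_iff_eq_empty, ← Finset.disjoint_iff_inter_eq_empty] at hdisj
  have hKr := hsub r hr hx (Rule.attrs_nonempty_iff.1 hne)
    (consistentE_liftK_union_of_disjoint (hwf r hr) hK hdisj)
  obtain ⟨a, ha⟩ := hne
  obtain ⟨y, hy, rfl⟩ := Finset.mem_image.1 ha
  refine Finset.disjoint_left.1 hdisj ha (Finset.mem_image.2 ⟨(y.1, some y.2), hKr ?_, rfl⟩)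
  exact Finset.mem_image_of_mem _ (Finset.mem_filter.1 hy).1

lemma beta_restrict_le_depth {G : DGraph} {S : Finset Rule} {ext : Bool} (hG : G.IsDG S ext)
    (hsol : G.SolvesAR S) (hwf : ∀ r ∈ S, r.WF) {α : Finset (ℕ × Option ℕ)}
    (hα : α ∈ ESys S ext) : beta (restrict S α) ≤ G.depth := by
  obtain ⟨p, t, hcp, hK, -⟩ := G.exists_isCompletePath_consistentE hG hα
  refine beta_le_depth_of_isCompletePath hG hwf hcp hK subset_rfl fun r hr _ _ hcons => ?_
  obtain ⟨hterm, hincons⟩ := hsol p t hcp (hK.mono Finset.subset_union_left)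
  by_contra hnot
  exact hincons r hr (fun hrt => hnot (hterm r hrt)) hcons

lemma beta_I_AD_restrict_le_depth {G : DGraph} {S : Finset Rule} (hG : G.IsDG S true)
    (hsol : G.SolvesAD S) (hwf : ∀ r ∈ S, r.WF) {α : Finset (ℕ × Option ℕ)}
    (hα : α ∈ ESys S true) : beta (I_AD (restrict S α)) ≤ G.depth := by
  obtain ⟨p, t, hcp, hK, hstar⟩ := G.exists_isCompletePath_consistentE hG hα
  refine beta_le_depth_of_isCompletePath hG hwf hcp hK (I_AD_subset _)
    fun r hr hx hlen hcons => ?_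
  obtain ⟨hterm, hincons⟩ := hsol p t hcp (hK.mono Finset.subset_union_left)
  by_contra hnot
  refine hincons r hr (fun hrt => hnot (hterm r hrt)) (fun hrhs => ?_) hcons
  obtain ⟨r', hr', hrhs'⟩ := Finset.mem_image.1 hrhs
  obtain ⟨hmem, hlen0⟩ := restrict_mem_and_len_eq_zero hα.1 (hstar rfl)
    (G.termSet_subset hG hcp.2.1 hcp.2.2 hr') (hterm r' hr')
  exact (Finset.mem_filter.1 hx).2.resolve_left hlen
    (Finset.mem_image.2 ⟨_, Finset.mem_filter.2 ⟨hmem, hlen0⟩, hrhs'⟩)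

lemma beta_I_SR_restrict_le_depth {G : DGraph} {S : Finset Rule} (hG : G.IsDG S true)
    (hsol : G.SolvesSR S) (hwf : ∀ r ∈ S, r.WF) {α : Finset (ℕ × Option ℕ)}
    (hα : α ∈ ESys S true) : beta (I_SR (restrict S α)) ≤ G.depth := by
  obtain ⟨p, t, hcp, hK, hstar⟩ := G.exists_isCompletePath_consistentE hG hα
  refine beta_le_depth_of_isCompletePath hG hwf hcp hK (I_SR_subset _)
    fun r hr hx hlen hcons => ?_
  obtain ⟨hterm, hempty⟩ := hsol p t hcp (hK.mono Finset.subset_union_left)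
  obtain ⟨r', hr'⟩ := Finset.nonempty_iff_ne_empty.2 fun he => hempty he r hr hcons
  obtain ⟨hmem, hlen0⟩ := restrict_mem_and_len_eq_zero hα.1 (hstar rfl)
    (G.termSet_subset hG hcp.2.1 hcp.2.2 hr') (hterm r' hr')
  rw [I_SR, if_pos ⟨_, hmem, hlen0⟩] at hx
  exact absurd (Finset.mem_filter.1 hx).2 hlen

lemma _root_.List.getD_idxOf {α : Type*} [BEq α] [LawfulBEq α] {l : List α} {a : α} (d : α)
    (ha : a ∈ l) : l.getD (l.idxOf a) d = a := by
  rw [List.getD_eq_getElem _ _ (List.idxOf_lt_length_of_mem ha), List.getElem_idxOf]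

lemma _root_.List.Nodup.idxOf_getD {α : Type*} [BEq α] [LawfulBEq α] {l : List α}
    (hl : l.Nodup) (d : α) {v : ℕ} (hv : v < l.length) : l.idxOf (l.getD v d) = v := by
  rw [List.getD_eq_getElem _ _ hv, hl.idxOf_getElem]

section FullTree

variable (S : Finset Rule) (ext : Bool)

def fullQuery (j : ℕ) : ℕ := (attrs S).toList.getD j 0

/-- Nodes of depth `j`: the answers to the first `j` queries, the most recent first. -/
def fullLevel : ℕ → Finset (List (ℕ × Option ℕ))
  | 0 => {[]}
  | j + 1 => (fullLevel j).biUnion fun l =>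
      (allowed S ext (fullQuery S j)).image fun x => (fullQuery S j, x) :: l

def fullNodes : Finset (List (ℕ × Option ℕ)) :=
  (Finset.range ((attrs S).card + 1)).biUnion (fullLevel S ext)

def fullChild (l : List (ℕ × Option ℕ)) (x : Option ℕ) : List (ℕ × Option ℕ) :=
  (fullQuery S l.length, x) :: l

def fullIdx (l : List (ℕ × Option ℕ)) : ℕ := (fullNodes S ext).toList.idxOf l

def fullNode (v : ℕ) : List (ℕ × Option ℕ) := (fullNodes S ext).toList.getD v []

def fullTree : DGraph where
  n := (fullNodes S ext).card
  root := fullIdx S ext []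
  label v :=
    if (fullNode S ext v).length < (attrs S).card then
      Sum.inl (fullQuery S (fullNode S ext v).length)
    else Sum.inr (S.filter fun r => liftK r.K ⊆ (fullNode S ext v).toFinset)
  edges := ((fullNodes S ext).filter fun l => l.length < (attrs S).card).biUnion fun l =>
    (allowed S ext (fullQuery S l.length)).image fun x =>
      (fullIdx S ext l, x, fullIdx S ext (fullChild S l x))

variable {S ext}

lemma mem_fullLevel_succ {j : ℕ} {l : List (ℕ × Option ℕ)} :
    l ∈ fullLevel S ext (j + 1) ↔ ∃ m ∈ fullLevel S ext j,
      ∃ x ∈ allowed S ext (fullQuery S j), (fullQuery S j, x) :: m = l := by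
  simp only [fullLevel, Finset.mem_biUnion, Finset.mem_image]

lemma length_of_mem_fullLevel {j : ℕ} {l : List (ℕ × Option ℕ)} (h : l ∈ fullLevel S ext j) :
    l.length = j := by
  induction j generalizing l with
  | zero => simpa [fullLevel] using h
  | succ j ih =>
    obtain ⟨m, hm, x, -, rfl⟩ := mem_fullLevel_succ.1 h
    simp [ih hm]

lemma exists_mem_of_mem_fullLevel {j : ℕ} {l : List (ℕ × Option ℕ)} (h : l ∈ fullLevel S ext j)
    {i : ℕ} (hi : i < j) : ∃ x, (fullQuery S i, x) ∈ l := by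
  induction j generalizing l with
  | zero => omega
  | succ j ih =>
    obtain ⟨m, hm, x, -, rfl⟩ := mem_fullLevel_succ.1 h
    rcases Nat.lt_succ_iff_lt_or_eq.1 hi with hi | rfl
    · obtain ⟨y, hy⟩ := ih hm hi
      exact ⟨y, List.mem_cons_of_mem _ hy⟩
    · exact ⟨x, List.mem_cons_self⟩

lemma mem_fullNodes {l : List (ℕ × Option ℕ)} :
    l ∈ fullNodes S ext ↔ l.length ≤ (attrs S).card ∧ l ∈ fullLevel S ext l.length := by
  simp only [fullNodes, Finset.mem_biUnion, Finset.mem_range, Nat.lt_succ_iff]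
  exact ⟨fun ⟨j, hj, hl⟩ => length_of_mem_fullLevel hl ▸ ⟨hj, hl⟩, fun h => ⟨_, h⟩⟩

lemma nil_mem_fullNodes : [] ∈ fullNodes S ext :=
  mem_fullNodes.2 ⟨Nat.zero_le _, Finset.mem_singleton_self _⟩

lemma fullChild_mem_fullNodes {l : List (ℕ × Option ℕ)} (hl : l ∈ fullNodes S ext)
    (hlen : l.length < (attrs S).card) {x : Option ℕ}
    (hx : x ∈ allowed S ext (fullQuery S l.length)) :
    fullChild S l x ∈ fullNodes S ext :=
  mem_fullNodes.2 ⟨hlen, mem_fullLevel_succ.2 ⟨l, (mem_fullNodes.1 hl).2, x, hx, rfl⟩⟩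

lemma exists_fullChild_eq {l : List (ℕ × Option ℕ)} (hl : l ∈ fullNodes S ext) (hne : l ≠ []) :
    ∃ m ∈ fullNodes S ext, m.length < (attrs S).card ∧
      ∃ x ∈ allowed S ext (fullQuery S m.length), fullChild S m x = l := by
  obtain ⟨hlen, hlvl⟩ := mem_fullNodes.1 hl
  obtain ⟨j, hj⟩ := Nat.exists_eq_succ_of_ne_zero (List.length_eq_zero_iff.not.2 hne)
  rw [hj] at hlvl
  obtain ⟨m, hm, x, hx, rfl⟩ := mem_fullLevel_succ.1 hlvl
  have hmj := length_of_mem_fullLevel hm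
  subst hmj
  exact ⟨m, mem_fullNodes.2 ⟨by simp at hlen; omega, hm⟩, by simpa using hlen, x, hx, rfl⟩

lemma fullQuery_mem_attrs {j : ℕ} (hj : j < (attrs S).card) : fullQuery S j ∈ attrs S := by
  rw [fullQuery, List.getD_eq_getElem _ _ (by simpa using hj)]
  exact Finset.mem_toList.1 (List.getElem_mem _)

lemma exists_mem_of_mem_fullNodes {l : List (ℕ × Option ℕ)} (hl : l ∈ fullNodes S ext)
    (hlen : (attrs S).card ≤ l.length) {a : ℕ} (ha : a ∈ attrs S) : ∃ x, (a, x) ∈ l := by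
  obtain ⟨i, hi, rfl⟩ := List.getElem_of_mem (Finset.mem_toList.2 ha)
  have := exists_mem_of_mem_fullLevel (mem_fullNodes.1 hl).2 (i := i) (by simp at hi; omega)
  rwa [fullQuery, List.getD_eq_getElem _ _ hi] at this

lemma fullIdx_lt {l : List (ℕ × Option ℕ)} (hl : l ∈ fullNodes S ext) :
    fullIdx S ext l < (fullNodes S ext).card :=
  Finset.length_toList (fullNodes S ext) ▸ List.idxOf_lt_length_of_mem (Finset.mem_toList.2 hl)

lemma fullNode_fullIdx {l : List (ℕ × Option ℕ)} (hl : l ∈ fullNodes S ext) :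
    fullNode S ext (fullIdx S ext l) = l :=
  List.getD_idxOf _ (Finset.mem_toList.2 hl)

lemma fullNode_mem {v : ℕ} (hv : v < (fullNodes S ext).card) :
    fullNode S ext v ∈ fullNodes S ext := by
  rw [fullNode, List.getD_eq_getElem _ _ (by simpa using hv)]
  exact Finset.mem_toList.1 (List.getElem_mem _)

lemma fullIdx_fullNode {v : ℕ} (hv : v < (fullNodes S ext).card) :
    fullIdx S ext (fullNode S ext v) = v :=
  List.Nodup.idxOf_getD (Finset.nodup_toList _) _ (by simpa using hv)

lemma fullIdx_injOn {l m : List (ℕ × Option ℕ)} (hl : l ∈ fullNodes S ext)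
    (hm : m ∈ fullNodes S ext) (h : fullIdx S ext l = fullIdx S ext m) : l = m := by
  rw [← fullNode_fullIdx hl, h, fullNode_fullIdx hm]

lemma mem_fullTree_edges {e : ℕ × Option ℕ × ℕ} :
    e ∈ (fullTree S ext).edges ↔ ∃ l ∈ fullNodes S ext, l.length < (attrs S).card ∧
      ∃ x ∈ allowed S ext (fullQuery S l.length),
        (fullIdx S ext l, x, fullIdx S ext (fullChild S l x)) = e := by
  simp only [fullTree, Finset.mem_biUnion, Finset.mem_filter, Finset.mem_image, and_assoc]

lemma mem_fullTree_edges_iff {v w : ℕ} {x : Option ℕ} :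
    (v, x, w) ∈ (fullTree S ext).edges ↔ v < (fullNodes S ext).card ∧
      (fullNode S ext v).length < (attrs S).card ∧
      x ∈ allowed S ext (fullQuery S (fullNode S ext v).length) ∧
      w = fullIdx S ext (fullChild S (fullNode S ext v) x) := by
  rw [mem_fullTree_edges]
  constructor
  · rintro ⟨l, hl, hlen, y, hy, he⟩
    simp only [Prod.mk.injEq] at he
    obtain ⟨rfl, rfl, rfl⟩ := he
    rw [fullNode_fullIdx hl]
    exact ⟨fullIdx_lt hl, hlen, hy, rfl⟩
  · rintro ⟨hv, hlen, hx, rfl⟩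
    exact ⟨_, fullNode_mem hv, hlen, x, hx, by rw [fullIdx_fullNode hv]⟩

lemma fullNode_length_lt_of_step {u w : ℕ} (h : (fullTree S ext).step u w) :
    (fullNode S ext u).length < (fullNode S ext w).length := by
  obtain ⟨x, he⟩ := h
  obtain ⟨hu, hlen, hx, rfl⟩ := mem_fullTree_edges_iff.1 he
  rw [fullNode_fullIdx (fullChild_mem_fullNodes (fullNode_mem hu) hlen hx)]
  exact Nat.lt_succ_self _

lemma fullTree_acyclic : (fullTree S ext).Acyclic := fun _ hv =>
  lt_irrefl _ <| Relation.transGen_eq_self (r := ((· < ·) : ℕ → ℕ → Prop)) ▸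
    hv.lift (fun u => (fullNode S ext u).length) fun _ _ => fullNode_length_lt_of_step

lemma fullTree_isTerminal_iff {v : ℕ} (hv : v < (fullNodes S ext).card) :
    (fullTree S ext).IsTerminal v ↔ (attrs S).card ≤ (fullNode S ext v).length := by
  refine ⟨fun ht => not_lt.1 fun hlen => ?_, fun hlen e he hev => ?_⟩
  · obtain ⟨δ, hδ⟩ := VS_nonempty (fullQuery_mem_attrs hlen)
    exact ht _ (mem_fullTree_edges_iff.2 ⟨hv, hlen, some_mem_allowed ext hδ, rfl⟩) rfl
  · obtain ⟨u, x, w⟩ := e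
    subst hev
    exact (mem_fullTree_edges_iff.1 he).2.1.not_ge hlen

lemma fullTree_isDG : (fullTree S ext).IsDG S ext := by
  refine ⟨fullIdx_lt nil_mem_fullNodes, fun ⟨v, x, w⟩ he => ?_, fullTree_acyclic, fun v hv => ?_⟩
  · obtain ⟨hv, hlen, hx, rfl⟩ := mem_fullTree_edges_iff.1 he
    exact ⟨hv, fullIdx_lt (fullChild_mem_fullNodes (fullNode_mem hv) hlen hx)⟩
  split_ifs with ht
  · exact ⟨_, if_neg (not_lt.2 ((fullTree_isTerminal_iff hv).1 ht)), Finset.filter_subset _ _⟩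
  have hlen : (fullNode S ext v).length < (attrs S).card :=
    not_le.1 fun h => ht ((fullTree_isTerminal_iff hv).2 h)
  refine ⟨_, if_pos hlen, fullQuery_mem_attrs hlen, fun x => ⟨?_, fun hx => ?_⟩, ?_⟩
  · rintro ⟨w, hw⟩
    exact (mem_fullTree_edges_iff.1 hw).2.2.1
  · exact ⟨_, mem_fullTree_edges_iff.2 ⟨hv, hlen, hx, rfl⟩⟩
  · intro x w w' hw hw'
    rw [(mem_fullTree_edges_iff.1 hw).2.2.2, (mem_fullTree_edges_iff.1 hw').2.2.2]

lemma fullTree_isTree : (fullTree S ext).IsTree := by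
  refine ⟨fun ⟨v, x, w⟩ he hw => ?_, fun v hv hvr => ?_⟩
  · obtain ⟨hv, hlen, hx, rfl⟩ := mem_fullTree_edges_iff.1 he
    exact List.cons_ne_nil _ _ <|
      fullIdx_injOn (fullChild_mem_fullNodes (fullNode_mem hv) hlen hx) nil_mem_fullNodes hw
  have hne : fullNode S ext v ≠ [] := fun h =>
    hvr (by rw [← fullIdx_fullNode hv, h]; rfl)
  obtain ⟨m, hm, hmlen, x, hx, hmx⟩ := exists_fullChild_eq (fullNode_mem hv) hne
  refine ⟨(fullIdx S ext m, x, v), ⟨mem_fullTree_edges_iff.2 ?_, rfl⟩, ?_⟩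
  · rw [fullNode_fullIdx hm, hmx, fullIdx_fullNode hv]
    exact ⟨fullIdx_lt hm, hmlen, hx, rfl⟩
  rintro ⟨u, y, w⟩ ⟨he, rfl⟩
  obtain ⟨hu, hulen, hy, hw⟩ := mem_fullTree_edges_iff.1 he
  have hchild : fullChild S (fullNode S ext u) y = fullChild S m x := by
    rw [hmx, ← fullNode_fullIdx (fullChild_mem_fullNodes (fullNode_mem hu) hulen hy), ← hw]
  simp only [fullChild, List.cons.injEq, Prod.mk.injEq] at hchild
  obtain ⟨⟨-, rfl⟩, hum⟩ := hchild
  rw [← hum, fullIdx_fullNode hu]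

lemma fullTree_chainFrom {l : List (ℕ × Option ℕ)} (hl : l ∈ fullNodes S ext)
    {p : List (ℕ × Option ℕ)} {t : ℕ} (h : (fullTree S ext).chainFrom (fullIdx S ext l) p t) :
    fullNode S ext t ∈ fullNodes S ext ∧
      (fullTree S ext).pathEqs p ∪ l.toFinset = (fullNode S ext t).toFinset := by
  induction p generalizing l with
  | nil =>
    obtain rfl : fullIdx S ext l = t := h
    simpa [fullNode_fullIdx hl, DGraph.pathEqs_nil] using hl
  | cons e rest ih =>
    obtain ⟨u, x⟩ := e
    obtain ⟨rfl, w, hw, hrest⟩ := h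
    obtain ⟨-, hlen, hx, rfl⟩ := mem_fullTree_edges_iff.1 hw
    rw [fullNode_fullIdx hl] at hlen hx hrest
    have hlab : (fullTree S ext).label (fullIdx S ext l) = Sum.inl (fullQuery S l.length) := by
      simp only [fullTree, fullNode_fullIdx hl, if_pos hlen]
    obtain ⟨ht, hpath⟩ := ih (fullChild_mem_fullNodes hl hlen hx) hrest
    refine ⟨ht, ?_⟩
    rw [DGraph.pathEqs_cons hlab, Finset.insert_union, ← Finset.union_insert, ← hpath]
    simp only [fullChild, List.toFinset_cons]

lemma fullTree_solvesAR : (fullTree S ext).SolvesAR S := by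
  intro p t hcp _
  obtain ⟨ht, hpath⟩ := fullTree_chainFrom nil_mem_fullNodes hcp.1
  rw [List.toFinset_nil, Finset.union_empty] at hpath
  have hlen := (fullTree_isTerminal_iff hcp.2.2).1 hcp.2.1
  have htermSet : (fullTree S ext).termSet t =
      S.filter fun r => liftK r.K ⊆ (fullNode S ext t).toFinset := by
    simp [DGraph.termSet, fullTree, not_lt.2 hlen]
  rw [htermSet, hpath]
  refine ⟨fun r hr => (Finset.mem_filter.1 hr).2, fun r hr hrt hcons' => ?_⟩
  obtain ⟨q, hq, hqt⟩ := Finset.not_subset.1 fun hsub => hrt (Finset.mem_filter.2 ⟨hr, hsub⟩)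
  obtain ⟨y, hy, rfl⟩ := Finset.mem_image.1 hq
  obtain ⟨x, hx⟩ := exists_mem_of_mem_fullNodes ht hlen
    (Finset.mem_biUnion.2 ⟨r, hr, Finset.mem_image_of_mem Prod.fst hy⟩)
  obtain rfl : some y.2 = x := hcons' _ (Finset.mem_union_left _ hq) _
    (Finset.mem_union_right _ (List.mem_toFinset.2 hx)) rfl
  exact hqt (List.mem_toFinset.2 hx)

end FullTree

lemma le_sInf_depth {P : DGraph → Prop} {b : ℕ} (hP : ∃ G, P G) (hb : ∀ G, P G → b ≤ G.depth) :
    b ≤ sInf {m | ∃ G, P G ∧ G.depth = m} :=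
  le_csInf (hP.elim fun G hG => ⟨_, G, hG, rfl⟩) fun _ ⟨G, hG, hm⟩ => hm ▸ hb G hG

lemma sSup_image_le_sSup_image {ι : Type*} {A : Set ι} (hA : A.Nonempty) {f g : ι → ℕ}
    (hfg : ∀ i ∈ A, f i ≤ g i) (hg : BddAbove (g '' A)) : sSup (f '' A) ≤ sSup (g '' A) :=
  csSup_le (hA.image f) <| Set.forall_mem_image.2 fun i hi =>
    (hfg i hi).trans (le_csSup hg (Set.mem_image_of_mem g hi))

lemma betaCplus_le_betaC (S : Finset Rule) (ext : Bool) : betaCplus S ext ≤ betaC S ext :=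
  sSup_image_le_sSup_image ⟨∅, empty_mem_ESys S ext⟩ (fun _ _ => betaPlus_le_beta _)
    ⟨nPar S, Set.forall_mem_image.2 fun _ _ => beta_le_nPar_of_subset_restrict subset_rfl⟩

lemma betaIplus_le_betaI (S : Finset Rule) {I : Finset Rule → Finset Rule} (hI : ∀ T, I T ⊆ T) :
    betaIplus S I ≤ betaI S I :=
  sSup_image_le_sSup_image ⟨∅, empty_mem_ESys S true⟩ (fun _ _ => betaPlus_le_beta _)
    ⟨nPar S, Set.forall_mem_image.2 fun _ _ => beta_le_nPar_of_subset_restrict (hI _)⟩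

lemma betaC_le_depth {G : DGraph} {S : Finset Rule} {ext : Bool} (hG : G.IsDG S ext)
    (hsol : G.SolvesAR S) (hwf : ∀ r ∈ S, r.WF) : betaC S ext ≤ G.depth :=
  csSup_le ⟨_, ∅, empty_mem_ESys S ext, rfl⟩ fun _ ⟨_, hα, hb⟩ =>
    hb ▸ beta_restrict_le_depth hG hsol hwf hα

lemma betaI_I_AD_le_depth {G : DGraph} {S : Finset Rule} (hG : G.IsDG S true)
    (hsol : G.SolvesAD S) (hwf : ∀ r ∈ S, r.WF) : betaI S I_AD ≤ G.depth :=
  csSup_le ⟨_, ∅, empty_mem_ESys S true, rfl⟩ fun _ ⟨_, hα, hb⟩ =>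
    hb ▸ beta_I_AD_restrict_le_depth hG hsol hwf hα

lemma betaI_I_SR_le_depth {G : DGraph} {S : Finset Rule} (hG : G.IsDG S true)
    (hsol : G.SolvesSR S) (hwf : ∀ r ∈ S, r.WF) : betaI S I_SR ≤ G.depth :=
  csSup_le ⟨_, ∅, empty_mem_ESys S true, rfl⟩ fun _ ⟨_, hα, hb⟩ =>
    hb ▸ beta_I_SR_restrict_le_depth hG hsol hwf hα

theorem statement_12_general (S : Finset Rule) (hwf : ∀ r ∈ S, r.WF) :
    (beta_ARplus S ≤ beta_AR S ∧ beta_AR S ≤ h_AR S) ∧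
    (beta_EARplus S ≤ beta_EAR S ∧ beta_EAR S ≤ h_EAR S) ∧
    (beta_EADplus S ≤ beta_EAD S ∧ beta_EAD S ≤ h_EAD S) ∧
    (beta_ESRplus S ≤ beta_ESR S ∧ beta_ESR S ≤ h_ESR S) := by
  have hAR : ∃ G, TreeSolvesAR S G := ⟨_, fullTree_isDG, fullTree_isTree, fullTree_solvesAR⟩
  have hEAR : ∃ G, TreeSolvesEAR S G := ⟨_, fullTree_isDG, fullTree_isTree, fullTree_solvesAR⟩
  have hEAD : ∃ G, TreeSolvesEAD S G :=
    ⟨_, fullTree_isDG, fullTree_isTree, fullTree_solvesAR.solvesAD⟩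
  have hESR : ∃ G, TreeSolvesESR S G :=
    ⟨_, fullTree_isDG, fullTree_isTree, fullTree_solvesAR.solvesSR⟩
  exact ⟨⟨betaCplus_le_betaC S false,
      le_sInf_depth hAR fun _ hG => betaC_le_depth hG.1 hG.2.2 hwf⟩,
    ⟨betaCplus_le_betaC S true, le_sInf_depth hEAR fun _ hG => betaC_le_depth hG.1 hG.2.2 hwf⟩,
    ⟨betaIplus_le_betaI S I_AD_subset,
      le_sInf_depth hEAD fun _ hG => betaI_I_AD_le_depth hG.1 hG.2.2 hwf⟩,
    ⟨betaIplus_le_betaI S I_SR_subset,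
      le_sInf_depth hESR fun _ hG => betaI_I_SR_le_depth hG.1 hG.2.2 hwf⟩⟩

/-- Lemma 14: for C ∈ {AR, EAR, EAD, ESR}, h_C(S) ≥ β_C(S) ≥ β_C⁺(S). -/
theorem statement_12 (S : Finset Rule) (hS : S.Nonempty) (hwf : ∀ r ∈ S, r.WF)
    (hn : 0 < nPar S) :
    (beta_ARplus S ≤ beta_AR S ∧ beta_AR S ≤ h_AR S) ∧
    (beta_EARplus S ≤ beta_EAR S ∧ beta_EAR S ≤ h_EAR S) ∧
    (beta_EADplus S ≤ beta_EAD S ∧ beta_EAD S ≤ h_EAD S) ∧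
    (beta_ESRplus S ≤ beta_ESR S ∧ beta_ESR S ≤ h_ESR S) :=
  statement_12_general S hwf

end DRS

end
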